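/- Let F_n be the free group of rank n and Γ_r its lower central series. Define 𝔈_r(n) := ker(End(F_n) → End(F_n/Γ_{r+1})). Then for all r ≥ 0 and k ≥ 1, every f ∈ 𝔈_r(n) satisfies f(z)z⁻¹ ∈ Γ_{k+r} for all z ∈ Γ_k. -/

import Mathlib

/-!
Everything happens in an arbitrary group `G`, with the `0`-indexed series
`γ i = (⊤ : Subgroup G).lowerCentralSeries i`; induct on `m` to get `f z * z⁻¹ ∈ γ (m + r)` for
`z ∈ γ m`. Modulo `N = γ (m + 1 + r)` the elements fixed by `f` form a subgroup (an equalizer of two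
maps to `G ⧸ N`), so it suffices to treat the generators `⁅p, q⁆` of `γ (m + 1)`, `p ∈ γ m`. Write
`f p = α p` and `f q = β q` with `α ∈ γ (m + r)`, `β ∈ γ r`. Modulo `N`, `α` is central, and
`⁅γ i, γ j⁆ ≤ γ (i + j + 1)` (three subgroups lemma) makes `β` commute with `p` and `⁅p, q⁆`;
hence `⁅α p, β q⁆ ≡ ⁅p, q⁆`.
-/

/-- `Gam G k` is the `k`-th term `Γ_k` of the lower central series of `G`
(with the convention `Γ_1 = G`). -/
abbrev Gam (G : Type*) [Group G] (k : ℕ) : Subgroup G := Subgroup.lowerCentralSeries (⊤ : Subgroup G) (k - 1)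

open scoped commutatorElement

namespace Subgroup

variable {G : Type*} [Group G]

theorem commutator_commutator_le_of_rotate {N A B C : Subgroup G} [N.Normal]
    (h₁ : ⁅⁅B, C⁆, A⁆ ≤ N) (h₂ : ⁅⁅C, A⁆, B⁆ ≤ N) : ⁅⁅A, B⁆, C⁆ ≤ N := by
  have le_iff_map_eq_bot : ∀ X Y : Subgroup G,
      ⁅X, Y⁆ ≤ N ↔ ⁅X.map (QuotientGroup.mk' N), Y.map (QuotientGroup.mk' N)⁆ = ⊥ := fun X Y => by
    rw [← map_commutator, map_eq_bot_iff, QuotientGroup.ker_mk']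
  rw [le_iff_map_eq_bot, map_commutator] at h₁ h₂ ⊢
  exact commutator_commutator_eq_bot_of_rotate h₁ h₂

theorem commutator_lowerCentralSeries_le (i j : ℕ) :
    ⁅(⊤ : Subgroup G).lowerCentralSeries i, (⊤ : Subgroup G).lowerCentralSeries j⁆ ≤
      (⊤ : Subgroup G).lowerCentralSeries (i + j + 1) := by
  induction j generalizing i with
  | zero => exact le_rfl
  | succ j ih =>
    rw [lowerCentralSeries_succ, commutator_comm]
    refine commutator_commutator_le_of_rotate ?_ ?_
    · rw [commutator_comm ⊤, ← lowerCentralSeries_succ, ← Nat.add_assoc, Nat.add_right_comm i j 1]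
      exact ih (i + 1)
    · exact commutator_mono (ih i) le_rfl

theorem commutatorElement_mul_mul_eq {a b p q : G} (ha : ∀ x, Commute a x) (hbp : Commute b p)
    (hbc : Commute b ⁅p, q⁆) : ⁅a * p, b * q⁆ = ⁅p, q⁆ :=
  calc ⁅a * p, b * q⁆ = ⁅p, b * q⁆ := by
        rw [commutatorElement_mul_left_eq_conj_mul, (ha _).commutator_eq, mul_one, (ha _).eq,
          mul_inv_cancel_right]
    _ = b * ⁅p, q⁆ * b⁻¹ := by
        rw [commutatorElement_mul_right_eq_mul_conj, hbp.symm.commutator_eq, one_mul]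
    _ = ⁅p, q⁆ := by rw [hbc.eq, mul_inv_cancel_right]

theorem mul_inv_mem_lowerCentralSeries_add {f : G →* G} {r : ℕ}
    (hf : ∀ x, f x * x⁻¹ ∈ (⊤ : Subgroup G).lowerCentralSeries r) (m : ℕ) :
    ∀ z ∈ (⊤ : Subgroup G).lowerCentralSeries m,
      f z * z⁻¹ ∈ (⊤ : Subgroup G).lowerCentralSeries (m + r) := by
  induction m with
  | zero => simpa using hf
  | succ m ih =>
    set N := (⊤ : Subgroup G).lowerCentralSeries (m + 1 + r)
    set π := QuotientGroup.mk' N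
    have mem_N_of_le : ∀ {i x}, m + 1 + r ≤ i →
        x ∈ (⊤ : Subgroup G).lowerCentralSeries i → x ∈ N :=
      fun hi hx => lowerCentralSeries_antitone ⊤ hi hx
    have commute_of_mem : ∀ {x y}, ⁅x, y⁆ ∈ N → Commute (π x) (π y) := fun h => by
      rw [← commutatorElement_eq_one_iff_commute, ← map_commutatorElement]
      exact (QuotientGroup.eq_one_iff _).mpr h
    suffices (⊤ : Subgroup G).lowerCentralSeries (m + 1) ≤ (π.comp f).eqLocus π from
      fun z hz => by simpa only [div_eq_mul_inv] using QuotientGroup.eq_iff_div_mem.mp (this hz)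
    rw [lowerCentralSeries_succ, commutator_le]
    intro p hp q _
    have hα := ih p hp
    have hβ := hf q
    have central : ∀ x, Commute (π (f p * p⁻¹)) x := by
      refine QuotientGroup.mk'_surjective N |>.forall.mpr fun g => commute_of_mem ?_
      exact mem_N_of_le (i := m + r + 1) (by omega) (commutator_mem_commutator hα (mem_top g))
    have commute_p : Commute (π (f q * q⁻¹)) (π p) := commute_of_mem <| mem_N_of_le (by omega) <|
      commutator_lowerCentralSeries_le r m (commutator_mem_commutator hβ hp)
    have commute_pq : Commute (π (f q * q⁻¹)) ⁅π p, π q⁆ := by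
      rw [← map_commutatorElement]
      refine commute_of_mem <| mem_N_of_le (by omega) <|
        commutator_lowerCentralSeries_le r (m + 1) (commutator_mem_commutator hβ ?_)
      exact commutator_mem_commutator hp (mem_top q)
    show π (f ⁅p, q⁆) = π ⁅p, q⁆
    rw [map_commutatorElement, ← inv_mul_cancel_right (f p) p, ← inv_mul_cancel_right (f q) q]
    simp only [map_commutatorElement, map_mul]
    exact commutatorElement_mul_mul_eq central commute_p commute_pq

end Subgroup

theorem stmt1_general (n r k : ℕ)
    (f : FreeGroup (Fin n) →* FreeGroup (Fin n))
    (hf : ∀ x : FreeGroup (Fin n), f x * x⁻¹ ∈ Gam (FreeGroup (Fin n)) (r + 1)) :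
    ∀ z ∈ Gam (FreeGroup (Fin n)) k, f z * z⁻¹ ∈ Gam (FreeGroup (Fin n)) (k + r) :=
  fun z hz => Subgroup.lowerCentralSeries_antitone ⊤ (by omega) <|
    Subgroup.mul_inv_mem_lowerCentralSeries_add hf (k - 1) z hz

/-- If `f ∈ 𝔈_r(n)`, i.e. `f(x)x⁻¹ ∈ Γ_{r+1}` for all `x` in the free group `F_n`,
then `f(z)z⁻¹ ∈ Γ_{k+r}` for all `z ∈ Γ_k` and all `k ≥ 1`. -/
theorem stmt1 (n r k : ℕ) (hk : 1 ≤ k)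
    (f : FreeGroup (Fin n) →* FreeGroup (Fin n))
    (hf : ∀ x : FreeGroup (Fin n), f x * x⁻¹ ∈ Gam (FreeGroup (Fin n)) (r + 1)) :
    ∀ z ∈ Gam (FreeGroup (Fin n)) k, f z * z⁻¹ ∈ Gam (FreeGroup (Fin n)) (k + r) :=
  stmt1_general n r k f hf
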